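/- arXiv:1403.2545 — 2 statements merged into one kernel-verified Lean document; each statement's English description precedes it below -/
import Mathlib

section
/- (Table 1, Case 7: scaling symmetry when f(t) = t^k.) Let m, n, k ∈ ℝ with n ≠ 0 and k ≠ 0, let ε = ±1, and let s ∈ ℝ. Suppose u : ℝ → ℝ → ℝ is smooth, positive on (0,∞) × ℝ, and satisfies ∂_t u + ε ∂_x(u^m) + t^k ∂_x^3(u^n) = 0 for all t > 0, x ∈ ℝ. Then the function v defined by v(t, x) = e^{(k-2)s} · u(e^{-(3m-n-2)s} t, e^{-(km-k+m-n)s} x) is smooth, positive, and satisfies the same equation ∂_t v + ε ∂_x(v^m) + t^k ∂_x^3(v^n) = 0 for all t > 0, x ∈ ℝ. (This is the one-parameter group generated by (3m-n-2) t ∂_t + (km-k+m-n) x ∂_x + (k-2) u ∂_u.) -/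
/-!
For `v t x = A * u (B * t) (C * x)` with `A, B, C > 0`, the three terms of the equation at
`(t, x)` are the corresponding terms for `u` at `(B t, C x)` times `A B`, `A^m C` and
`A^n C^3 B^{-k}`. The exponentials of the statement make these three factors equal, so the
equation for `v` is `A B` times the equation for `u`. The chain rule for `y ↦ f (c y)` holds for
Mathlib's `deriv` without any differentiability hypothesis, both sides being `0` where `f` is not
differentiable.
-/

open Real

noncomputable def pdT (u : ℝ → ℝ → ℝ) (t x : ℝ) : ℝ := deriv (fun s => u s x) t
noncomputable def pdX (u : ℝ → ℝ → ℝ) (t x : ℝ) : ℝ := deriv (fun y => u t y) x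
noncomputable def pdX3 (u : ℝ → ℝ → ℝ) (t x : ℝ) : ℝ := deriv (deriv (deriv (fun y => u t y))) x

section CompMul

variable {𝕜 E : Type*} [NontriviallyNormedField 𝕜] [NormedAddCommGroup E] [NormedSpace 𝕜 E]

theorem iteratedDeriv_comp_mul_left (c : 𝕜) (f : 𝕜 → E) (j : ℕ) (x : 𝕜) :
    iteratedDeriv j (fun y => f (c * y)) x = c ^ j • iteratedDeriv j f (c * x) := by
  induction j generalizing x with
  | zero => simp
  | succ j ih =>
    rw [iteratedDeriv_succ, funext ih, deriv_fun_const_smul_field,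
      deriv_comp_mul_left c (iteratedDeriv j f), iteratedDeriv_succ, smul_smul, pow_succ]

end CompMul

noncomputable def kmnOperator (ε m n k : ℝ) (u : ℝ → ℝ → ℝ) (t x : ℝ) : ℝ :=
  pdT u t x + ε * pdX (fun t x => u t x ^ m) t x + t ^ k * pdX3 (fun t x => u t x ^ n) t x

section Scaling

variable (w : ℝ → ℝ → ℝ) {A B C t : ℝ} (x : ℝ)

theorem pdT_const_mul_comp_mul :
    pdT (fun t x => A * w (B * t) (C * x)) t x = A * B * pdT w (B * t) (C * x) := by
  rw [pdT, deriv_const_mul_field, deriv_comp_mul_left B (fun τ => w τ (C * x)), smul_eq_mul,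
    mul_assoc, pdT]

theorem pdX_rpow_const_mul_comp_mul (p : ℝ) (hA : 0 ≤ A) (hw : ∀ y, 0 ≤ w (B * t) y) :
    pdX (fun t x => (A * w (B * t) (C * x)) ^ p) t x
      = A ^ p * C * pdX (fun t x => w t x ^ p) (B * t) (C * x) := by
  simp only [pdX, mul_rpow hA (hw _)]
  rw [deriv_const_mul_field, deriv_comp_mul_left C (fun z => w (B * t) z ^ p), smul_eq_mul,
    mul_assoc]

theorem pdX3_eq_iteratedDeriv (u : ℝ → ℝ → ℝ) (t x : ℝ) :
    pdX3 u t x = iteratedDeriv 3 (u t) x := by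
  rw [iteratedDeriv_eq_iterate]
  rfl

theorem pdX3_rpow_const_mul_comp_mul (p : ℝ) (hA : 0 ≤ A) (hw : ∀ y, 0 ≤ w (B * t) y) :
    pdX3 (fun t x => (A * w (B * t) (C * x)) ^ p) t x
      = A ^ p * C ^ 3 * pdX3 (fun t x => w t x ^ p) (B * t) (C * x) := by
  simp only [pdX3_eq_iteratedDeriv, mul_rpow hA (hw _)]
  rw [iteratedDeriv_const_mul_field (A ^ p) (fun y => w (B * t) (C * y) ^ p),
    iteratedDeriv_comp_mul_left C (fun z => w (B * t) z ^ p), smul_eq_mul, mul_assoc]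

theorem kmnOperator_const_mul_comp_mul (ε m n k : ℝ) (hA : 0 ≤ A) (hB : 0 ≤ B) (ht : 0 ≤ t)
    (hw : ∀ y, 0 ≤ w (B * t) y) (hm : A ^ m * C = A * B) (hn : A ^ n * C ^ 3 = A * B * B ^ k) :
    kmnOperator ε m n k (fun t x => A * w (B * t) (C * x)) t x
      = A * B * kmnOperator ε m n k w (B * t) (C * x) := by
  rw [kmnOperator, kmnOperator, pdT_const_mul_comp_mul, pdX_rpow_const_mul_comp_mul w x m hA hw,
    pdX3_rpow_const_mul_comp_mul w x n hA hw, hm, hn, mul_rpow hB ht]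
  ring

end Scaling

theorem contDiff_uncurry_const_mul_comp_mul {N : WithTop ℕ∞} {w : ℝ → ℝ → ℝ}
    (hw : ContDiff ℝ N (Function.uncurry w)) (A B C : ℝ) :
    ContDiff ℝ N (Function.uncurry fun t x => A * w (B * t) (C * x)) :=
  contDiff_const.mul (hw.comp (by fun_prop : ContDiff ℝ N fun p : ℝ × ℝ => (B * p.1, C * p.2)))

theorem exp_scaling_exponents (m n k s : ℝ) :
    exp ((k - 2) * s) ^ m * exp (-(k * m - k + m - n) * s)
        = exp ((k - 2) * s) * exp (-(3 * m - n - 2) * s) ∧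
      exp ((k - 2) * s) ^ n * exp (-(k * m - k + m - n) * s) ^ 3
        = exp ((k - 2) * s) * exp (-(3 * m - n - 2) * s) * exp (-(3 * m - n - 2) * s) ^ k := by
  simp only [← exp_mul, ← exp_nat_mul, ← exp_add]
  constructor <;> congr 1 <;> push_cast <;> ring

theorem scaling_symmetry_f_power_general
    (m n k : ℝ) (ε : ℝ) (s : ℝ)
    (u : ℝ → ℝ → ℝ) (hu : ContDiff ℝ (⊤ : ℕ∞) (Function.uncurry u))
    (hupos : ∀ t x : ℝ, 0 < t → 0 < u t x)
    (hupde : ∀ t x : ℝ, 0 < t →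
      pdT u t x + ε * pdX (fun t x => u t x ^ m) t x
        + t ^ k * pdX3 (fun t x => u t x ^ n) t x = 0)
    (v : ℝ → ℝ → ℝ)
    (hv : ∀ t x : ℝ, v t x = Real.exp ((k - 2) * s)
      * u (Real.exp (-(3 * m - n - 2) * s) * t) (Real.exp (-(k * m - k + m - n) * s) * x)) :
    ContDiff ℝ (⊤ : ℕ∞) (Function.uncurry v) ∧ (∀ t x : ℝ, 0 < t → 0 < v t x) ∧
      ∀ t x : ℝ, 0 < t →
        pdT v t x + ε * pdX (fun t x => v t x ^ m) t x
          + t ^ k * pdX3 (fun t x => v t x ^ n) t x = 0 := by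
  set A := exp ((k - 2) * s)
  set B := exp (-(3 * m - n - 2) * s)
  set C := exp (-(k * m - k + m - n) * s)
  obtain rfl : v = fun t x => A * u (B * t) (C * x) := funext₂ hv
  have hBt {t : ℝ} (ht : 0 < t) : 0 < B * t := mul_pos (exp_pos _) ht
  refine ⟨contDiff_uncurry_const_mul_comp_mul hu A B C, fun t x ht => ?_, fun t x ht => ?_⟩
  · exact mul_pos (exp_pos _) (hupos _ _ (hBt ht))
  · obtain ⟨hm, hn⟩ := exp_scaling_exponents m n k s
    have hw (y : ℝ) : 0 ≤ u (B * t) y := (hupos _ y (hBt ht)).le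
    have hpde : kmnOperator ε m n k u (B * t) (C * x) = 0 := hupde _ _ (hBt ht)
    show kmnOperator ε m n k _ t x = 0
    rw [kmnOperator_const_mul_comp_mul u x ε m n k (exp_pos _).le (exp_pos _).le ht.le hw hm hn,
      hpde, mul_zero]

/-- Table 1, Case 7: the scaling symmetry generated by
`(3m-n-2)t∂_t + (km-k+m-n)x∂_x + (k-2)u∂_u` when `f(t) = t^k`. -/
theorem scaling_symmetry_f_power
    (m n k : ℝ) (hn : n ≠ 0) (hk : k ≠ 0) (ε : ℝ) (hε : ε = 1 ∨ ε = -1) (s : ℝ)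
    (u : ℝ → ℝ → ℝ) (hu : ContDiff ℝ (⊤ : ℕ∞) (Function.uncurry u))
    (hupos : ∀ t x : ℝ, 0 < t → 0 < u t x)
    (hupde : ∀ t x : ℝ, 0 < t →
      pdT u t x + ε * pdX (fun t x => u t x ^ m) t x
        + t ^ k * pdX3 (fun t x => u t x ^ n) t x = 0)
    (v : ℝ → ℝ → ℝ)
    (hv : ∀ t x : ℝ, v t x = Real.exp ((k - 2) * s)
      * u (Real.exp (-(3 * m - n - 2) * s) * t) (Real.exp (-(k * m - k + m - n) * s) * x)) :
    ContDiff ℝ (⊤ : ℕ∞) (Function.uncurry v) ∧ (∀ t x : ℝ, 0 < t → 0 < v t x) ∧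
      ∀ t x : ℝ, 0 < t →
        pdT v t x + ε * pdX (fun t x => v t x ^ m) t x
          + t ^ k * pdX3 (fun t x => v t x ^ n) t x = 0 :=
  scaling_symmetry_f_power_general m n k ε s u hu hupos hupde v hv
end

section
/- (Equivalence of f = t² and f = 1/t for the KdV-type equation.) Let ε = ±1. Suppose u : ℝ → ℝ → ℝ is smooth and satisfies ∂_t u + ε ∂_x(u²) + t² ∂_x^3 u = 0 for all t > 0, x ∈ ℝ, and suppose v : ℝ → ℝ → ℝ is smooth with v(1/t, -x/t) = (2εt·u(t,x) - x)/(2ε) for all t > 0, x ∈ ℝ. Then for every t > 0 and x ∈ ℝ, at the point (τ, y) = (1/t, -x/t) one has ∂_τ v + ε ∂_y(v²) + τ^{-1} ∂_y^3 v = 0; i.e., the transformation t̃ = 1/t, x̃ = -x/t, ũ = (2εtu - x)/(2ε) maps the equation u_t + ε(u²)_x + t² u_xxx = 0 to the equation ũ_t̃ + ε(ũ²)_x̃ + t̃^{-1} ũ_x̃x̃x̃ = 0. -/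
/-!
On `τ > 0` the hypothesis on `v` determines it as
`ṽ(τ, y) = τ⁻¹ u(τ⁻¹, -τ⁻¹ y) + τ⁻¹ y / (2ε)`, and all derivatives in the conclusion are local,
so `v` may be replaced by `ṽ`. The chain rule then shows that the KdV operator with coefficient
`τ⁻¹` applied to `ṽ` at `(1/t, -x/t)` equals `-t³` times the operator with coefficient `t²` applied
to `u` at `(t, x)`; in `ṽ_τ + ε (ṽ²)_y` the terms without `u_t` or `u u_x` cancel in pairs.
-/

open Real

noncomputable def kdvOperator (ε : ℝ) (f : ℝ → ℝ) (u : ℝ → ℝ → ℝ) (t x : ℝ) : ℝ :=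
  pdT u t x + ε * pdX (fun t x => u t x ^ 2) t x + f t * pdX3 u t x

/-- The paper's `ũ = (2εtu - x)/(2ε)` written in the new coordinates `τ = 1/t`, `y = -x/t`. -/
noncomputable def kdvInversion (ε : ℝ) (u : ℝ → ℝ → ℝ) (τ y : ℝ) : ℝ :=
  τ⁻¹ * u τ⁻¹ (-τ⁻¹ * y) + τ⁻¹ / (2 * ε) * y

section PartialDerivatives

variable {u : ℝ → ℝ → ℝ}

theorem pdT_eq_fderiv {t x : ℝ} (hu : DifferentiableAt ℝ (Function.uncurry u) (t, x)) :
    pdT u t x = fderiv ℝ (Function.uncurry u) (t, x) (1, 0) :=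
  (hu.hasFDerivAt.comp_hasDerivAt (f := fun s => (s, x)) t
    ((hasDerivAt_id t).prodMk (hasDerivAt_const t x))).deriv

theorem pdX_eq_fderiv {t x : ℝ} (hu : DifferentiableAt ℝ (Function.uncurry u) (t, x)) :
    pdX u t x = fderiv ℝ (Function.uncurry u) (t, x) (0, 1) :=
  (hu.hasFDerivAt.comp_hasDerivAt (f := fun y => (t, y)) x
    ((hasDerivAt_const x t).prodMk (hasDerivAt_id x))).deriv

theorem hasDerivAt_uncurry_comp {a b : ℝ → ℝ} {a' b' s : ℝ}
    (hu : DifferentiableAt ℝ (Function.uncurry u) (a s, b s))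
    (ha : HasDerivAt a a' s) (hb : HasDerivAt b b' s) :
    HasDerivAt (fun s => u (a s) (b s)) (a' * pdT u (a s) (b s) + b' * pdX u (a s) (b s)) s := by
  have hab : ((a', b') : ℝ × ℝ) = a' • ((1, 0) : ℝ × ℝ) + b' • ((0, 1) : ℝ × ℝ) := by simp
  have := hu.hasFDerivAt.comp_hasDerivAt s (ha.prodMk hb)
  rwa [hab, map_add, map_smul, map_smul, ← pdT_eq_fderiv hu, ← pdX_eq_fderiv hu] at this

theorem pdX_sq {t x : ℝ} (hu : DifferentiableAt ℝ (u t) x) :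
    pdX (fun t x => u t x ^ 2) t x = 2 * u t x * pdX u t x := by
  rw [pdX, pdX, ← Pi.pow_def, deriv_pow hu]
  ring

end PartialDerivatives

theorem deriv_mul_comp_mul_add_mul {φ : ℝ → ℝ} (hφ : Differentiable ℝ φ) (a k c : ℝ) :
    deriv (fun y => a * φ (k * y) + c * y) = fun y => a * k * deriv φ (k * y) + c := by
  funext y
  rw [deriv_fun_add (by fun_prop) (by fun_prop), deriv_const_mul_field']
  simp [deriv_comp_mul_left, mul_assoc]

section KdvInversion

variable {ε : ℝ} {u : ℝ → ℝ → ℝ} {τ : ℝ}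

theorem pdX_kdvInversion (hu : Differentiable ℝ (u τ⁻¹)) (y : ℝ) :
    pdX (kdvInversion ε u) τ y = τ⁻¹ * -τ⁻¹ * pdX u τ⁻¹ (-τ⁻¹ * y) + τ⁻¹ / (2 * ε) :=
  congrFun (deriv_mul_comp_mul_add_mul hu _ _ _) y

theorem pdX3_kdvInversion (hu : Differentiable ℝ (u τ⁻¹)) (y : ℝ) :
    pdX3 (kdvInversion ε u) τ y = τ⁻¹ * (-τ⁻¹) ^ 3 * pdX3 u τ⁻¹ (-τ⁻¹ * y) := by
  simp only [pdX3, kdvInversion]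
  rw [deriv_mul_comp_mul_add_mul hu]
  simp only [deriv_add_const', deriv_const_mul_field', deriv_comp_mul_left, smul_eq_mul]
  ring

theorem pdT_kdvInversion (hτ : τ ≠ 0) {y : ℝ}
    (hu : DifferentiableAt ℝ (Function.uncurry u) (τ⁻¹, -τ⁻¹ * y)) :
    pdT (kdvInversion ε u) τ y = -(τ ^ 2)⁻¹ * u τ⁻¹ (-τ⁻¹ * y)
      + τ⁻¹ * (-(τ ^ 2)⁻¹ * pdT u τ⁻¹ (-τ⁻¹ * y) + (τ ^ 2)⁻¹ * y * pdX u τ⁻¹ (-τ⁻¹ * y))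
      - (τ ^ 2)⁻¹ / (2 * ε) * y := by
  have hinv := hasDerivAt_inv hτ
  have hu' := hasDerivAt_uncurry_comp hu hinv (hinv.fun_neg.mul_const y)
  have := (hinv.fun_mul hu').fun_add ((hinv.div_const (2 * ε)).mul_const y)
  simp only [pdT, kdvInversion, this.deriv]
  ring

end KdvInversion

theorem kdvOperator_kdvInversion {ε : ℝ} (hε : ε ≠ 0) {u : ℝ → ℝ → ℝ}
    (hu : Differentiable ℝ (Function.uncurry u)) {t : ℝ} (ht : t ≠ 0) (x : ℝ) :
    kdvOperator ε (·⁻¹) (kdvInversion ε u) t⁻¹ (-x / t)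
      = -t ^ 3 * kdvOperator ε (· ^ 2) u t x := by
  have hpt : -t * (-x / t) = x := by field_simp
  have hslice : ∀ s, Differentiable ℝ (u s) := fun s =>
    hu.comp (differentiable_const s |>.prodMk differentiable_id)
  have hw : DifferentiableAt ℝ (kdvInversion ε u t⁻¹) (-x / t) := by
    unfold kdvInversion; fun_prop
  rw [kdvOperator, kdvOperator, pdX_sq hw, pdX_sq (hslice t x), pdX_kdvInversion (hslice _),
    pdX3_kdvInversion (hslice _), pdT_kdvInversion (inv_ne_zero ht) (hu _)]
  simp only [kdvInversion, inv_inv, hpt]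
  field_simp
  ring

theorem kdvOperator_congr_of_pos {ε : ℝ} {f : ℝ → ℝ} {v w : ℝ → ℝ → ℝ}
    (hvw : ∀ τ y, 0 < τ → v τ y = w τ y) {τ : ℝ} (hτ : 0 < τ) (y : ℝ) :
    kdvOperator ε f v τ y = kdvOperator ε f w τ y := by
  have hslice : (fun y => v τ y) = fun y => w τ y := funext fun y => hvw τ y hτ
  have hpdT : pdT v τ y = pdT w τ y := Filter.EventuallyEq.deriv_eq <| by
    filter_upwards [eventually_gt_nhds hτ] with s hs using hvw s y hs
  simp only [kdvOperator, pdX, pdX3, hslice, hpdT]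

theorem equivalence_t_squared_and_t_inverse_general
    (ε : ℝ) (hε : ε = 1 ∨ ε = -1)
    (u : ℝ → ℝ → ℝ) (hu : ContDiff ℝ (⊤ : ℕ∞) (Function.uncurry u))
    (hupde : ∀ t x : ℝ, 0 < t →
      pdT u t x + ε * pdX (fun t x => u t x ^ 2) t x + t ^ 2 * pdX3 u t x = 0)
    (v : ℝ → ℝ → ℝ)
    (hvu : ∀ t x : ℝ, 0 < t →
      v (1 / t) (-x / t) = (2 * ε * t * u t x - x) / (2 * ε)) :
    ∀ t x : ℝ, 0 < t →
      pdT v (1 / t) (-x / t)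
        + ε * pdX (fun τ y => v τ y ^ 2) (1 / t) (-x / t)
        + (1 / t)⁻¹ * pdX3 v (1 / t) (-x / t) = 0 := by
  intro t x ht
  have hε0 : ε ≠ 0 := by rcases hε with rfl | rfl <;> norm_num
  have hvw : ∀ τ y, 0 < τ → v τ y = kdvInversion ε u τ y := by
    intro τ y hτ
    have h := hvu τ⁻¹ (-τ⁻¹ * y) (inv_pos.2 hτ)
    rw [one_div, inv_inv, neg_mul, neg_neg, mul_div_cancel_left₀ _ (inv_ne_zero hτ.ne')] at h
    rw [h, kdvInversion]
    field_simp
    ring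
  change kdvOperator ε (·⁻¹) v (1 / t) (-x / t) = 0
  rw [one_div, kdvOperator_congr_of_pos hvw (inv_pos.2 ht),
    kdvOperator_kdvInversion hε0 (hu.differentiable (by simp)) ht.ne', kdvOperator, hupde t x ht,
    mul_zero]

/-- Equivalence of `f = t²` and `f = 1/t` for the KdV-type equation, via
`t̃ = 1/t`, `x̃ = -x/t`, `ũ = (2εtu - x)/(2ε)`. -/
theorem equivalence_t_squared_and_t_inverse
    (ε : ℝ) (hε : ε = 1 ∨ ε = -1)
    (u : ℝ → ℝ → ℝ) (hu : ContDiff ℝ (⊤ : ℕ∞) (Function.uncurry u))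
    (hupde : ∀ t x : ℝ, 0 < t →
      pdT u t x + ε * pdX (fun t x => u t x ^ 2) t x + t ^ 2 * pdX3 u t x = 0)
    (v : ℝ → ℝ → ℝ) (hv : ContDiff ℝ (⊤ : ℕ∞) (Function.uncurry v))
    (hvu : ∀ t x : ℝ, 0 < t →
      v (1 / t) (-x / t) = (2 * ε * t * u t x - x) / (2 * ε)) :
    ∀ t x : ℝ, 0 < t →
      pdT v (1 / t) (-x / t)
        + ε * pdX (fun τ y => v τ y ^ 2) (1 / t) (-x / t)
        + (1 / t)⁻¹ * pdX3 v (1 / t) (-x / t) = 0 :=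
  equivalence_t_squared_and_t_inverse_general ε hε u hu hupde v hvu
end
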